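/- arXiv:2403.18552 — 2 statements merged into one kernel-verified Lean document; each statement's English description precedes it below -/
import Mathlib

section
/- Let 𝒢 ⊆ 𝓕 be a sub-σ-algebra, h > 0, and q, m ≥ 1 integers. Let V : Ω → ℝ^q be square-integrable and let W : Ω → ℝ^m be square-integrable, independent of 𝒢, with 𝔼[W] = 0 and 𝔼[‖W‖²] = h·m. Define the ℝ^{q×m}-valued random variable Z := h^{-1}·𝔼[V Wᵀ | 𝒢] (conditional expectation taken entrywise). Then h·𝔼[‖Z‖²] ≤ m·(𝔼[‖V‖²] − 𝔼[‖𝔼[V | 𝒢]‖²]), where ‖·‖ denotes the Frobenius norm on ℝ^{q×m} and the Euclidean norm on ℝ^q. -/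
open MeasureTheory ProbabilityTheory

section Helpers

variable {Ω : Type*} {G : MeasurableSpace Ω} [m0 : MeasurableSpace Ω] {μ : Measure Ω}

lemma l2_mul_integrable {f g : Ω → ℝ} (hf : MemLp f 2 μ) (hg : MemLp g 2 μ) :
    Integrable (fun ω => f ω * g ω) μ := by
  have h : MemLp (f • g) 1 μ := hg.smul hf (hpqr := ⟨by rw [inv_one]; exact ENNReal.inv_two_add_inv_two⟩)
  exact memLp_one_iff_integrable.1 h

lemma indep_mono_left {m₁ m₂ m₃ : MeasurableSpace Ω} (h : Indep m₁ m₂ μ) (h31 : m₃ ≤ m₁) :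
    Indep m₃ m₂ μ := by
  rw [Indep_iff] at h ⊢
  exact fun t1 t2 h1 h2 => h t1 t2 (h31 _ h1) h2

lemma condexp_eq_const_of_indep [IsProbabilityMeasure μ] (hG : G ≤ m0) {f : Ω → ℝ}
    (hf : Integrable f μ)
    (hind : Indep (MeasurableSpace.comap f inferInstance) G μ) :
    μ[f|G] =ᵐ[μ] fun _ => ∫ x, f x ∂μ := by
  refine (ae_eq_condExp_of_forall_setIntegral_eq hG hf
    (fun s _ hμs => (integrableOn_const hμs.ne)) (fun s hs hμs => ?_)
    stronglyMeasurable_const.aestronglyMeasurable).symm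
  have hmeas : Measurable[G] (s.indicator (fun _ => (1:ℝ))) :=
    measurable_const.indicator hs
  have hind' : IndepFun f (s.indicator (fun _ => (1:ℝ))) μ := by
    rw [IndepFun_iff_Indep]
    exact indep_mono_left (indep_mono_left hind.symm (measurable_iff_comap_le.1 hmeas)).symm le_rfl
  have h1 : ∫ x in s, f x ∂μ = ∫ x, f x * s.indicator (fun _ => (1:ℝ)) x ∂μ := by
    rw [← integral_indicator (hG s hs)]
    congr 1
    funext x
    by_cases hx : x ∈ s <;> simp [Set.indicator, hx]
  have h2 : ∫ x, s.indicator (fun _ => (1:ℝ)) x ∂μ = (μ s).toReal := by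
    rw [integral_indicator (hG s hs)]
    simp
    rfl
  rw [setIntegral_const, h1, hind'.integral_fun_mul_eq_mul_integral hf.aestronglyMeasurable
    ((hmeas.mono hG le_rfl).aestronglyMeasurable), h2]
  ring_nf
  rfl
lemma condexp_mul_sq_le [IsProbabilityMeasure μ] (hG : G ≤ m0) {f g : Ω → ℝ}
    (hf : MemLp f 2 μ) (hg : MemLp g 2 μ) :
    ∀ᵐ ω ∂μ, ((μ[fun ω' => f ω' * g ω'|G]) ω) ^ 2
      ≤ (μ[fun ω' => f ω' ^ 2|G]) ω * (μ[fun ω' => g ω' ^ 2|G]) ω := by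
  have hf2 : Integrable (fun ω => f ω ^ 2) μ := hf.integrable_sq
  have hg2 : Integrable (fun ω => g ω ^ 2) μ := hg.integrable_sq
  have hfg : Integrable (fun ω => f ω * g ω) μ := l2_mul_integrable hf hg
  have key : ∀ t : ℚ, ∀ᵐ ω ∂μ,
      0 ≤ (μ[fun ω' => f ω' ^ 2|G]) ω + ((2 * (t:ℝ)) * (μ[fun ω' => f ω' * g ω'|G]) ω
        + (t:ℝ) ^ 2 * (μ[fun ω' => g ω' ^ 2|G]) ω) := by
    intro t
    have h0 : 0 ≤ᵐ[μ] μ[fun ω' => (f ω' + (t:ℝ) * g ω') ^ 2|G] :=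
      condExp_nonneg (Filter.Eventually.of_forall fun ω => sq_nonneg _)
    have hsum : (fun ω' => (f ω' + (t:ℝ) * g ω') ^ 2)
        = (fun ω' => f ω' ^ 2) + ((2 * (t:ℝ)) • fun ω' => f ω' * g ω')
          + ((t:ℝ) ^ 2 • fun ω' => g ω' ^ 2) := by
      funext ω'
      simp [Pi.add_apply, Pi.smul_apply, smul_eq_mul]
      ring
    have h1 : μ[fun ω' => (f ω' + (t:ℝ) * g ω') ^ 2|G]
        =ᵐ[μ] μ[(fun ω' => f ω' ^ 2) + ((2 * (t:ℝ)) • fun ω' => f ω' * g ω')|G]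
          + μ[(t:ℝ) ^ 2 • fun ω' => g ω' ^ 2|G] := by
      rw [hsum]
      exact condExp_add (hf2.add (hfg.smul _)) (hg2.smul _) _
    have h2 : μ[(fun ω' => f ω' ^ 2) + ((2 * (t:ℝ)) • fun ω' => f ω' * g ω')|G]
        =ᵐ[μ] μ[fun ω' => f ω' ^ 2|G] + μ[(2 * (t:ℝ)) • fun ω' => f ω' * g ω'|G] :=
      condExp_add hf2 (hfg.smul _) _
    have h3 : μ[(2 * (t:ℝ)) • fun ω' => f ω' * g ω'|G]
        =ᵐ[μ] (2 * (t:ℝ)) • μ[fun ω' => f ω' * g ω'|G] := condExp_smul _ _ _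
    have h4 : μ[(t:ℝ) ^ 2 • fun ω' => g ω' ^ 2|G]
        =ᵐ[μ] (t:ℝ) ^ 2 • μ[fun ω' => g ω' ^ 2|G] := condExp_smul _ _ _
    filter_upwards [h0, h1, h2, h3, h4] with ω h0ω h1ω h2ω h3ω h4ω
    have := h0ω
    rw [h1ω] at this
    simp only [Pi.add_apply, Pi.smul_apply, smul_eq_mul, Pi.zero_apply] at this h2ω h3ω h4ω
    rw [h2ω, h3ω, h4ω] at this
    linarith
  have hkey : ∀ᵐ ω ∂μ, ∀ t : ℚ,
      0 ≤ (μ[fun ω' => f ω' ^ 2|G]) ω + ((2 * (t:ℝ)) * (μ[fun ω' => f ω' * g ω'|G]) ω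
        + (t:ℝ) ^ 2 * (μ[fun ω' => g ω' ^ 2|G]) ω) := ae_all_iff.2 key
  have hA : 0 ≤ᵐ[μ] μ[fun ω' => f ω' ^ 2|G] :=
    condExp_nonneg (Filter.Eventually.of_forall fun ω => sq_nonneg _)
  have hB : 0 ≤ᵐ[μ] μ[fun ω' => g ω' ^ 2|G] :=
    condExp_nonneg (Filter.Eventually.of_forall fun ω => sq_nonneg _)
  filter_upwards [hkey, hA, hB] with ω hω hAω hBω
  set A := (μ[fun ω' => f ω' ^ 2|G]) ω
  set B := (μ[fun ω' => g ω' ^ 2|G]) ω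
  set C := (μ[fun ω' => f ω' * g ω'|G]) ω
  -- extend to all real t by density
  have hreal : ∀ x : ℝ, 0 ≤ B * (x * x) + (2 * C) * x + A := by
    have hcl : IsClosed {x : ℝ | 0 ≤ B * (x * x) + (2 * C) * x + A} :=
      isClosed_le continuous_const (by continuity)
    intro x
    have hx : x ∈ closure (Set.range ((↑) : ℚ → ℝ)) := Rat.denseRange_cast x
    have hsub : Set.range ((↑) : ℚ → ℝ) ⊆ {x : ℝ | 0 ≤ B * (x * x) + (2 * C) * x + A} := by
      rintro _ ⟨t, rfl⟩
      have := hω t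
      simp only [Set.mem_setOf_eq]
      nlinarith [hω t]
    exact hcl.closure_subset (closure_mono hsub hx)
  have hd : discrim B (2 * C) A ≤ 0 := discrim_le_zero hreal
  rw [discrim] at hd
  nlinarith [hd]
lemma memℒp_two_condexp [IsProbabilityMeasure μ] (hG : G ≤ m0) {f : Ω → ℝ}
    (hf : MemLp f 2 μ) : MemLp (μ[f|G]) 2 μ := by
  have hcs := condexp_mul_sq_le (μ := μ) hG hf (memLp_const (1:ℝ))
  have h1 : (fun ω' => f ω' * (fun _ : Ω => (1:ℝ)) ω') = f := by funext ω'; simp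
  have h2 : (fun ω' => ((fun _ : Ω => (1:ℝ)) ω') ^ 2) = fun _ : Ω => (1:ℝ) := by
    funext ω'; simp
  rw [h1, h2, condExp_const hG] at hcs
  have hbound : ∀ᵐ ω ∂μ, ‖((μ[f|G]) ω) ^ 2‖ ≤ (μ[fun ω' => f ω' ^ 2|G]) ω := by
    filter_upwards [hcs] with ω hω
    rw [Real.norm_eq_abs, abs_of_nonneg (sq_nonneg _)]
    simpa using hω
  have hint : Integrable (fun ω => ((μ[f|G]) ω) ^ 2) μ :=
    Integrable.mono' integrable_condExp
      ((stronglyMeasurable_condExp.mono hG).aestronglyMeasurable.pow 2) hbound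
  exact (memLp_two_iff_integrable_sq
    (stronglyMeasurable_condExp.mono hG).aestronglyMeasurable).2 hint
lemma condexp_euclidean_apply [IsProbabilityMeasure μ] (hG : G ≤ m0) {n : ℕ}
    {f : Ω → EuclideanSpace ℝ (Fin n)} (hf : Integrable f μ) (j : Fin n) :
    (fun ω => (μ[f|G]) ω j) =ᵐ[μ] μ[fun ω => f ω j|G] := by
  have hproj : ∀ (x : EuclideanSpace ℝ (Fin n)),
      (EuclideanSpace.proj j : EuclideanSpace ℝ (Fin n) →L[ℝ] ℝ) x = x j := fun _ => rfl
  have hfj : Integrable (fun ω => f ω j) μ :=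
    (EuclideanSpace.proj j : EuclideanSpace ℝ (Fin n) →L[ℝ] ℝ).integrable_comp hf
  refine ae_eq_condExp_of_forall_setIntegral_eq hG hfj ?_ ?_ ?_
  · intro s hs hμs
    exact (((EuclideanSpace.proj j : EuclideanSpace ℝ (Fin n) →L[ℝ] ℝ).integrable_comp
      integrable_condExp).integrableOn)
  · intro s hs hμs
    have h1 : ∫ x in s, (EuclideanSpace.proj j : EuclideanSpace ℝ (Fin n) →L[ℝ] ℝ)
          ((μ[f|G]) x) ∂μ
        = (EuclideanSpace.proj j : EuclideanSpace ℝ (Fin n) →L[ℝ] ℝ)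
          (∫ x in s, (μ[f|G]) x ∂μ) :=
      ContinuousLinearMap.integral_comp_comm _ integrable_condExp.integrableOn
    have h2 : ∫ x in s, (EuclideanSpace.proj j : EuclideanSpace ℝ (Fin n) →L[ℝ] ℝ)
          ((f x)) ∂μ
        = (EuclideanSpace.proj j : EuclideanSpace ℝ (Fin n) →L[ℝ] ℝ)
          (∫ x in s, f x ∂μ) :=
      ContinuousLinearMap.integral_comp_comm _ hf.integrableOn
    have h3 : ∫ x in s, (μ[f|G]) x ∂μ = ∫ x in s, f x ∂μ := setIntegral_condExp hG hf hs
    refine h1.trans ?_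
    rw [h3, ← h2]
    rfl
  · exact ((EuclideanSpace.proj j :
      EuclideanSpace ℝ (Fin n) →L[ℝ] ℝ).continuous.comp_stronglyMeasurable
        stronglyMeasurable_condExp).aestronglyMeasurable

lemma euclid_norm_sq {n : ℕ} (x : EuclideanSpace ℝ (Fin n)) :
    ‖x‖ ^ 2 = ∑ j, x j ^ 2 := by
  rw [EuclideanSpace.norm_eq, Real.sq_sqrt (by positivity)]
  simp [sq_abs]
lemma condexp_pullout [IsProbabilityMeasure μ] (hG : G ≤ m0) {f g : Ω → ℝ}
    (hf : StronglyMeasurable[G] f) (hfg : Integrable (fun ω => f ω * g ω) μ)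
    (hg : Integrable g μ) :
    μ[fun ω => f ω * g ω|G] =ᵐ[μ] fun ω => f ω * (μ[g|G]) ω :=
  condExp_mul_of_stronglyMeasurable_left hf hfg hg

end Helpers

attribute [local instance] Matrix.frobeniusSeminormedAddCommGroup
  Matrix.frobeniusNormedAddCommGroup

lemma frob_norm_sq {a b : ℕ} (A : Matrix (Fin a) (Fin b) ℝ) :
    ‖A‖ ^ 2 = ∑ i, ∑ j, A i j ^ 2 := by
  have hnn : (0:ℝ) ≤ ∑ i, ∑ j, ‖A i j‖ ^ (2:ℝ) := by positivity
  rw [Matrix.frobenius_norm_def]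
  rw [← Real.rpow_natCast ((∑ i, ∑ j, ‖A i j‖ ^ (2:ℝ)) ^ (1/2:ℝ)) 2, ← Real.rpow_mul hnn]
  norm_num [Real.norm_eq_abs, sq_abs]
private lemma z_aux
    {Ω : Type*} (G : MeasurableSpace Ω) [mΩ : MeasurableSpace Ω]
    (μ : Measure Ω) [IsProbabilityMeasure μ] (hG : G ≤ mΩ)
    (h : ℝ) (hh : 0 < h) (q m : ℕ) (hq : 1 ≤ q) (hm : 1 ≤ m)
    (V : Ω → EuclideanSpace ℝ (Fin q)) (hV : MemLp V 2 μ)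
    (W : Ω → EuclideanSpace ℝ (Fin m)) (hW : MemLp W 2 μ)
    (hWindep : Indep (MeasurableSpace.comap W inferInstance) G μ)
    (hWmean : ∫ ω, W ω ∂μ = 0)
    (hWvar : ∫ ω, ‖W ω‖ ^ 2 ∂μ = h * m)
    (Z : Ω → Matrix (Fin q) (Fin m) ℝ)
    (hZ : ∀ ω, Z ω = h⁻¹ •
      Matrix.of fun j k => (μ[fun ω' => V ω' j * W ω' k | G]) ω) :
    h * ∫ ω, ‖Z ω‖ ^ 2 ∂μ
      ≤ m * ((∫ ω, ‖V ω‖ ^ 2 ∂μ) - ∫ ω, ‖(μ[V | G]) ω‖ ^ 2 ∂μ) := by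
  -- coordinate functions
  have hVj : ∀ j, MemLp (fun ω => V ω j) 2 μ := fun j =>
    (EuclideanSpace.proj j : EuclideanSpace ℝ (Fin q) →L[ℝ] ℝ).comp_memLp' hV
  have hWk : ∀ k, MemLp (fun ω => W ω k) 2 μ := fun k =>
    (EuclideanSpace.proj k : EuclideanSpace ℝ (Fin m) →L[ℝ] ℝ).comp_memLp' hW
  set p : Fin q → Ω → ℝ := fun j => μ[fun ω => V ω j|G] with hp_def
  set U : Fin q → Ω → ℝ := fun j ω => V ω j - p j ω with hU_def
  set c : Fin q → Fin m → Ω → ℝ := fun j k => μ[fun ω => V ω j * W ω k|G] with hc_def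
  have hpj : ∀ j, MemLp (p j) 2 μ := fun j => memℒp_two_condexp hG (hVj j)
  have hUj : ∀ j, MemLp (U j) 2 μ := fun j => (hVj j).sub (hpj j)
  -- independence facts
  have hindW : ∀ (g : EuclideanSpace ℝ (Fin m) → ℝ), Measurable g →
      Indep (MeasurableSpace.comap (fun ω => g (W ω)) inferInstance) G μ := by
    intro g hg
    refine indep_mono_left hWindep ?_
    rw [show (fun ω => g (W ω)) = g ∘ W from rfl, ← MeasurableSpace.comap_comp]
    exact MeasurableSpace.comap_mono (measurable_iff_comap_le.1 hg)
  have hprojMeas : ∀ k : Fin m, Measurable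
      (fun x : EuclideanSpace ℝ (Fin m) => x k) := fun k =>
    (EuclideanSpace.proj k : EuclideanSpace ℝ (Fin m) →L[ℝ] ℝ).measurable
  -- E[W_k | G] = 0
  have hWmean_k : ∀ k, ∫ ω, W ω k ∂μ = 0 := by
    intro k
    have h1 : ∫ ω, (EuclideanSpace.proj k : EuclideanSpace ℝ (Fin m) →L[ℝ] ℝ) (W ω) ∂μ
        = (EuclideanSpace.proj k : EuclideanSpace ℝ (Fin m) →L[ℝ] ℝ) (∫ ω, W ω ∂μ) :=
      ContinuousLinearMap.integral_comp_comm _ (hW.integrable one_le_two)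
    rw [hWmean] at h1
    simpa using h1
  have hWk0 : ∀ k, μ[fun ω => W ω k|G] =ᵐ[μ] fun _ => (0:ℝ) := by
    intro k
    have := condexp_eq_const_of_indep hG ((hWk k).integrable one_le_two)
      (hindW (fun x => x k) (hprojMeas k))
    rw [hWmean_k k] at this
    exact this
  -- E[W_k² | G] = E[W_k²]
  have hWk2 : ∀ k, μ[fun ω => (W ω k)^2|G] =ᵐ[μ] fun _ => ∫ ω, (W ω k)^2 ∂μ := by
    intro k
    exact condexp_eq_const_of_indep hG (hWk k).integrable_sq
      (hindW (fun x => (x k)^2) ((hprojMeas k).pow_const 2))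
  -- c j k = E[U_j W_k | G]
  have hcd : ∀ j k, c j k =ᵐ[μ] μ[fun ω => U j ω * W ω k|G] := by
    intro j k
    have hsplit : (fun ω => V ω j * W ω k)
        = fun ω => U j ω * W ω k + p j ω * W ω k := by
      funext ω; simp only [hU_def]; ring
    have hiUW : Integrable (fun ω => U j ω * W ω k) μ :=
      l2_mul_integrable (hUj j) (hWk k)
    have hipW : Integrable (fun ω => p j ω * W ω k) μ :=
      l2_mul_integrable (hpj j) (hWk k)
    have h1 : c j k =ᵐ[μ] μ[fun ω => U j ω * W ω k|G] + μ[fun ω => p j ω * W ω k|G] := by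
      show μ[fun ω => V ω j * W ω k|G] =ᵐ[μ] _
      rw [hsplit]
      exact condExp_add hiUW hipW _
    have h2 : μ[fun ω => p j ω * W ω k|G] =ᵐ[μ] fun ω => p j ω * (μ[fun ω' => W ω' k|G]) ω :=
      condexp_pullout hG stronglyMeasurable_condExp hipW ((hWk k).integrable one_le_two)
    filter_upwards [h1, h2, hWk0 k] with ω hω1 hω2 hω3
    rw [hω1, Pi.add_apply, hω2, hω3]
    simp
  -- conditional Cauchy-Schwarz
  have hCS : ∀ j k, ∀ᵐ ω ∂μ, (c j k ω)^2
      ≤ (μ[fun ω' => U j ω' ^ 2|G]) ω * ∫ ω', (W ω' k)^2 ∂μ := by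
    intro j k
    filter_upwards [hcd j k, condexp_mul_sq_le hG (hUj j) (hWk k), hWk2 k]
      with ω h1 h2 h3
    rw [h1]
    calc ((μ[fun ω' => U j ω' * W ω' k|G]) ω)^2
        ≤ (μ[fun ω' => U j ω' ^ 2|G]) ω * (μ[fun ω' => (W ω' k) ^ 2|G]) ω := h2
      _ = (μ[fun ω' => U j ω' ^ 2|G]) ω * ∫ ω', (W ω' k)^2 ∂μ := by rw [h3]
  -- sum of variances of W coordinates
  have hsumW : ∑ k, ∫ ω, (W ω k)^2 ∂μ = h * m := by
    rw [← hWvar]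
    rw [show (fun ω => ‖W ω‖^2) = fun ω => ∑ k, (W ω k)^2 from
      funext fun ω => euclid_norm_sq (W ω)]
    exact (integral_finset_sum _ (fun k _ => (hWk k).integrable_sq)).symm
  -- pointwise bound for ‖Z‖²
  have hZnorm : ∀ ω, ‖Z ω‖^2 = h⁻¹^2 * ∑ j, ∑ k, (c j k ω)^2 := by
    intro ω
    rw [hZ ω, frob_norm_sq]
    rw [Finset.mul_sum]
    congr 1
    funext j
    rw [Finset.mul_sum]
    congr 1
    funext k
    simp only [Matrix.smul_apply, Matrix.of_apply, smul_eq_mul]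
    ring
  -- a.e. bound
  have hae : ∀ᵐ ω ∂μ, ‖Z ω‖^2
      ≤ h⁻¹^2 * ((∑ j, (μ[fun ω' => U j ω' ^ 2|G]) ω) * (h * m)) := by
    have hall : ∀ᵐ ω ∂μ, ∀ j k, (c j k ω)^2
        ≤ (μ[fun ω' => U j ω' ^ 2|G]) ω * ∫ ω', (W ω' k)^2 ∂μ := by
      rw [ae_all_iff]
      intro j
      rw [ae_all_iff]
      exact hCS j
    filter_upwards [hall] with ω hω
    rw [hZnorm ω]
    have hsum : ∑ j, ∑ k, (c j k ω)^2
        ≤ (∑ j, (μ[fun ω' => U j ω' ^ 2|G]) ω) * (h * m) := by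
      rw [Finset.sum_mul]
      refine Finset.sum_le_sum fun j _ => ?_
      calc ∑ k, (c j k ω)^2
          ≤ ∑ k, (μ[fun ω' => U j ω' ^ 2|G]) ω * ∫ ω', (W ω' k)^2 ∂μ :=
            Finset.sum_le_sum fun k _ => hω j k
        _ = (μ[fun ω' => U j ω' ^ 2|G]) ω * ∑ k, ∫ ω', (W ω' k)^2 ∂μ := by
            rw [Finset.mul_sum]
        _ = (μ[fun ω' => U j ω' ^ 2|G]) ω * (h * m) := by rw [hsumW]
    exact mul_le_mul_of_nonneg_left hsum (by positivity)
  -- integrate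
  have hgint : Integrable (fun ω =>
      h⁻¹^2 * ((∑ j, (μ[fun ω' => U j ω' ^ 2|G]) ω) * (h * m))) μ := by
    refine Integrable.const_mul ?_ _
    exact (integrable_finset_sum _ (fun j _ => integrable_condExp)).mul_const _
  have hIZ : ∫ ω, ‖Z ω‖^2 ∂μ
      ≤ h⁻¹^2 * (h * m) * ∑ j, ∫ ω, U j ω ^ 2 ∂μ := by
    have h1 : ∫ ω, ‖Z ω‖^2 ∂μ ≤ ∫ ω,
        h⁻¹^2 * ((∑ j, (μ[fun ω' => U j ω' ^ 2|G]) ω) * (h * m)) ∂μ :=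
      integral_mono_of_nonneg (Filter.Eventually.of_forall fun ω => by positivity) hgint hae
    refine h1.trans_eq ?_
    rw [integral_const_mul]
    have h2 : ∫ ω, (∑ j, (μ[fun ω' => U j ω' ^ 2|G]) ω) * (h * m) ∂μ
        = (∫ ω, ∑ j, (μ[fun ω' => U j ω' ^ 2|G]) ω ∂μ) * (h * m) := integral_mul_const _ _
    rw [h2, integral_finset_sum _ (fun j _ => integrable_condExp)]
    have h3 : ∀ j : Fin q, ∫ ω, (μ[fun ω' => U j ω' ^ 2|G]) ω ∂μ = ∫ ω, U j ω ^ 2 ∂μ :=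
      fun j => integral_condExp hG
    rw [Finset.sum_congr rfl (fun j _ => h3 j)]
    ring
  -- Pythagoras for each coordinate
  have hip : ∀ j, ∫ ω, p j ω * V ω j ∂μ = ∫ ω, p j ω * p j ω ∂μ := by
    intro j
    have hipV : Integrable (fun ω => p j ω * V ω j) μ :=
      l2_mul_integrable (hpj j) (hVj j)
    have h1 : μ[fun ω => p j ω * V ω j|G] =ᵐ[μ] fun ω => p j ω * p j ω :=
      condexp_pullout hG stronglyMeasurable_condExp hipV ((hVj j).integrable one_le_two)
    rw [← integral_condExp (f := fun ω => p j ω * V ω j) hG]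
    exact integral_congr_ae h1
  have hPyj : ∀ j, ∫ ω, U j ω ^ 2 ∂μ
      = (∫ ω, (V ω j) ^ 2 ∂μ) - ∫ ω, (p j ω) ^ 2 ∂μ := by
    intro j
    have e1 : (fun ω => U j ω ^ 2)
        = fun ω => (V ω j)^2 - (2 * (p j ω * V ω j) - p j ω ^ 2) := by
      funext ω; simp only [hU_def]; ring
    have i2 : Integrable (fun ω => 2 * (p j ω * V ω j)) μ :=
      (l2_mul_integrable (hpj j) (hVj j)).const_mul 2
    have i1 : Integrable (fun ω => 2 * (p j ω * V ω j) - p j ω ^ 2) μ :=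
      i2.sub (hpj j).integrable_sq
    rw [e1, integral_sub (hVj j).integrable_sq i1, integral_sub i2 (hpj j).integrable_sq,
      integral_const_mul, hip j]
    have : ∫ ω, p j ω * p j ω ∂μ = ∫ ω, p j ω ^ 2 ∂μ := by
      congr 1; funext ω; ring
    rw [this]; ring
  -- norms as coordinate sums
  have hVnorm : ∫ ω, ‖V ω‖^2 ∂μ = ∑ j, ∫ ω, (V ω j)^2 ∂μ := by
    rw [show (fun ω => ‖V ω‖^2) = fun ω => ∑ j, (V ω j)^2 from
      funext fun ω => euclid_norm_sq (V ω)]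
    exact integral_finset_sum _ (fun j _ => (hVj j).integrable_sq)
  have hPco : ∀ j, (fun ω => (μ[V|G]) ω j) =ᵐ[μ] p j :=
    fun j => condexp_euclidean_apply hG (hV.integrable one_le_two) j
  have hPnorm : ∫ ω, ‖(μ[V|G]) ω‖^2 ∂μ = ∑ j, ∫ ω, (p j ω)^2 ∂μ := by
    have e1 : (fun ω => ‖(μ[V|G]) ω‖^2) =ᵐ[μ] fun ω => ∑ j, (p j ω)^2 := by
      have : ∀ᵐ ω ∂μ, ∀ j, (μ[V|G]) ω j = p j ω := by
        rw [ae_all_iff]; intro j; exact hPco j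
      filter_upwards [this] with ω hω
      rw [euclid_norm_sq]
      exact Finset.sum_congr rfl fun j _ => by rw [hω j]
    rw [integral_congr_ae e1]
    exact integral_finset_sum _ (fun j _ => (hpj j).integrable_sq)
  -- conclude
  have hfinal : ∑ j, ∫ ω, U j ω ^ 2 ∂μ
      = (∫ ω, ‖V ω‖^2 ∂μ) - ∫ ω, ‖(μ[V|G]) ω‖^2 ∂μ := by
    rw [hVnorm, hPnorm, ← Finset.sum_sub_distrib]
    exact Finset.sum_congr rfl fun j _ => hPyj j
  have hmain : h * ∫ ω, ‖Z ω‖^2 ∂μ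
      ≤ h * (h⁻¹^2 * (h * m) * ∑ j, ∫ ω, U j ω ^ 2 ∂μ) :=
    mul_le_mul_of_nonneg_left hIZ hh.le
  refine hmain.trans_eq ?_
  rw [hfinal]
  field_simp

/-- Estimate for `Z = h⁻¹·𝔼[V Wᵀ | 𝒢]` (proof of Lemma 3.2, second part):
`h·𝔼[‖Z‖²] ≤ m·(𝔼[‖V‖²] − 𝔼[‖𝔼[V|𝒢]‖²])`. -/
theorem z_conditional_variance_estimate
    {Ω : Type*} [mΩ : MeasurableSpace Ω] (μ : Measure Ω) [IsProbabilityMeasure μ]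
    (G : MeasurableSpace Ω) (hG : G ≤ mΩ)
    (h : ℝ) (hh : 0 < h) (q m : ℕ) (hq : 1 ≤ q) (hm : 1 ≤ m)
    (V : Ω → EuclideanSpace ℝ (Fin q)) (hV : MemLp V 2 μ)
    (W : Ω → EuclideanSpace ℝ (Fin m)) (hW : MemLp W 2 μ)
    (hWindep : Indep (MeasurableSpace.comap W inferInstance) G μ)
    (hWmean : ∫ ω, W ω ∂μ = 0)
    (hWvar : ∫ ω, ‖W ω‖ ^ 2 ∂μ = h * m)
    (Z : Ω → Matrix (Fin q) (Fin m) ℝ)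
    (hZ : ∀ ω, Z ω = h⁻¹ •
      Matrix.of fun j k => (μ[fun ω' => V ω' j * W ω' k | G]) ω) :
    h * ∫ ω, ‖Z ω‖ ^ 2 ∂μ
      ≤ m * ((∫ ω, ‖V ω‖ ^ 2 ∂μ) - ∫ ω, ‖(μ[V | G]) ω‖ ^ 2 ∂μ) :=
  z_aux (mΩ := mΩ) G μ hG h hh q m hq hm V hV W hW hWindep hWmean hWvar Z hZ
end

section
/- Fix an integer m ≥ 1, a time horizon T > 0, a real constant k^b, and nonnegative constants L^b_z, L^σ_x, L^f_x, L^f_y, L^f_z, L^g_x. Define B̄_ℓ := inf{ B̄(λ1, λ3, λ4) : λ1 > 0, λ3 > 2mL^f_z, λ4 > 0 }. If −2k^b − L^σ_x > 1/T, then B̄_ℓ = m·L^b_z·L^g_x/(−2k^b − L^σ_x). -/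
/-- The difference quotient `(e^{cT} - 1)/c`, interpreted as `T` when `c = 0`. -/
noncomputable def expQuot (c T : ℝ) : ℝ :=
  if c = 0 then T else (Real.exp (c * T) - 1) / c

/-- The difference quotient `(1 - e^{-cT})/c`, interpreted as `T` when `c = 0`. -/
noncomputable def expQuotNeg (c T : ℝ) : ℝ :=
  if c = 0 then T else (1 - Real.exp (-(c * T))) / c

/-- The contraction constant `B̄` from Theorem 3.3. -/
noncomputable def Bbar (m : ℕ) (T kb Lsx Lbz Lfx Lfz Lgx lam1 lam3 lam4 : ℝ) : ℝ :=
  let K1 : ℝ := 2 * kb + lam1 + Lsx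
  let C1 : ℝ := lam1⁻¹ * Lbz
  let C3 : ℝ := 2 * lam3⁻¹
  let C4 : ℝ := (m : ℝ) / (1 - 2 * (m : ℝ) * Lfz * lam3⁻¹)
  Real.exp (max (-(K1 * T)) 0) * Lfx * C1 * C4 * C3 * expQuot K1 T
    + Real.exp (max (-(K1 * T)) 0) * C1 * C4 * Lgx * (1 + lam4) * Real.exp (K1 * T)

/-- The contraction constant `Ā` from Theorem 3.3. -/
noncomputable def Abar (m : ℕ)
    (T kb kf Lby Lbz Lsx Lsy Lfx Lfy Lfz Lgx lam1 lam2 lam3 lam4 : ℝ) : ℝ :=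
  let K1 : ℝ := 2 * kb + lam1 + Lsx
  let K2 : ℝ := lam1⁻¹ * Lby + Lsy
  let K3 : ℝ := 2 * kf + lam2
  let K4 : ℝ := Lfx / lam2
  let C1 : ℝ := lam1⁻¹ * Lbz
  let C2 : ℝ := 2 * (lam3⁻¹ * Lfy + lam3)
  let C4 : ℝ := (m : ℝ) / (1 - 2 * (m : ℝ) * Lfz * lam3⁻¹)
  (Lgx * (1 + lam4) * Real.exp ((K1 + K3) * T) + K4 * expQuot (K1 + K3) T)
    * (1 - Bbar m T kb Lsx Lbz Lfx Lfz Lgx lam1 lam3 lam4)⁻¹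
    * (K2 * expQuotNeg (K1 + K3) T
        + Real.exp (max (-(K1 * T)) 0) * C1 * C4 * C2 * expQuotNeg K3 T)

lemma expQuot_nonneg (c T : ℝ) (hT : 0 ≤ T) : 0 ≤ expQuot c T := by
  unfold expQuot
  rcases lt_trichotomy c 0 with hc | hc | hc
  · rw [if_neg hc.ne, div_nonneg_iff]
    refine Or.inr ⟨?_, hc.le⟩
    have : c * T ≤ 0 := mul_nonpos_of_nonpos_of_nonneg hc.le hT
    have := Real.exp_le_one_iff.mpr this
    linarith
  · simp [hc, hT]
  · rw [if_neg hc.ne']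
    apply div_nonneg _ hc.le
    have : 0 ≤ c * T := mul_nonneg hc.le hT
    have := Real.one_le_exp this
    linarith

set_option maxHeartbeats 1000000 in
/-- Infimum of `B̄` over the admissible parameters, second regime:
if `−2k^b − L^σ_x > 1/T` then the infimum equals `m·L^b_z·L^g_x/(−2k^b − L^σ_x)`. -/
theorem Bbar_inf_second_regime
    (m : ℕ) (hm : 1 ≤ m) (T : ℝ) (hT : 0 < T) (kb : ℝ)
    (Lbz Lsx Lfx Lfy Lfz Lgx : ℝ)
    (hLbz : 0 ≤ Lbz) (hLsx : 0 ≤ Lsx) (hLfx : 0 ≤ Lfx) (hLfy : 0 ≤ Lfy)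
    (hLfz : 0 ≤ Lfz) (hLgx : 0 ≤ Lgx)
    (hreg : 1 / T < -2 * kb - Lsx) :
    sInf {x : ℝ | ∃ lam1 > (0 : ℝ), ∃ lam3 > 2 * (m : ℝ) * Lfz, ∃ lam4 > (0 : ℝ),
        x = Bbar m T kb Lsx Lbz Lfx Lfz Lgx lam1 lam3 lam4}
      = (m : ℝ) * Lbz * Lgx / (-2 * kb - Lsx) := by
  set a : ℝ := -2 * kb - Lsx with ha_def
  have ha : 0 < a := lt_trans (by positivity) hreg
  have haT : 1 < a * T := (div_lt_iff₀ hT).mp hreg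
  have hm1 : (1 : ℝ) ≤ (m : ℝ) := by exact_mod_cast hm
  have hmLfz : 0 ≤ 2 * (m : ℝ) * Lfz := by positivity
  set S := {x : ℝ | ∃ lam1 > (0 : ℝ), ∃ lam3 > 2 * (m : ℝ) * Lfz, ∃ lam4 > (0 : ℝ),
        x = Bbar m T kb Lsx Lbz Lfx Lfz Lgx lam1 lam3 lam4} with hS_def
  -- Lower bound: every element of S is ≥ target
  have hlow : ∀ x ∈ S, (m : ℝ) * Lbz * Lgx / a ≤ x := by
    rintro x ⟨lam1, hlam1, lam3, hlam3, lam4, hlam4, rfl⟩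
    have hlam3pos : 0 < lam3 := lt_of_le_of_lt hmLfz hlam3
    simp only [Bbar]
    set K1 : ℝ := 2 * kb + lam1 + Lsx with hK1_def
    have hK1 : K1 = lam1 - a := by rw [hK1_def, ha_def]; ring
    set C4 : ℝ := (m : ℝ) / (1 - 2 * (m : ℝ) * Lfz * lam3⁻¹) with hC4_def
    have hd1 : 2 * (m : ℝ) * Lfz * lam3⁻¹ < 1 := by
      rw [← div_eq_mul_inv, div_lt_one hlam3pos]; exact hlam3
    have hd0 : 0 ≤ 2 * (m : ℝ) * Lfz * lam3⁻¹ := by positivity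
    have hC4m : (m : ℝ) ≤ C4 := by
      rw [hC4_def, le_div_iff₀ (by linarith)]
      nlinarith [Nat.cast_nonneg (α := ℝ) m]
    have hC4pos : 0 < C4 := lt_of_lt_of_le (by linarith) hC4m
    have hq : 0 ≤ expQuot K1 T := expQuot_nonneg K1 T hT.le
    have hterm1 : 0 ≤ Real.exp (max (-(K1 * T)) 0) * Lfx * (lam1⁻¹ * Lbz) * C4 *
        (2 * lam3⁻¹) * expQuot K1 T := by positivity
    set Eexp : ℝ := Real.exp (max 0 (K1 * T)) with hE_def
    have hEE : Real.exp (max (-(K1 * T)) 0) * Real.exp (K1 * T) = Eexp := by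
      rw [← Real.exp_add, hE_def]
      congr 1
      rcases le_total (K1 * T) 0 with h | h
      · rw [max_eq_left (by linarith), max_eq_left h]; ring
      · rw [max_eq_right (by linarith), max_eq_right h]; ring
    have hE : lam1 ≤ a * Eexp := by
      rcases le_total lam1 a with h | h
      · have h1 : (1 : ℝ) ≤ Eexp := Real.one_le_exp (le_max_left _ _)
        nlinarith
      · have hKT : 0 ≤ K1 * T := by
          rw [hK1]; exact mul_nonneg (by linarith) hT.le
        have : Eexp = Real.exp (K1 * T) := by rw [hE_def, max_eq_right hKT]
        rw [this]
        have hexp : K1 * T + 1 ≤ Real.exp (K1 * T) := Real.add_one_le_exp _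
        rw [hK1] at hexp ⊢
        nlinarith
    have h1a : 1 / a ≤ Eexp / lam1 := by
      rw [div_le_div_iff₀ ha hlam1]
      linarith
    have key : (m : ℝ) / a ≤ C4 * ((1 + lam4) * (Eexp / lam1)) := by
      have h2 : 1 * (1 / a) ≤ (1 + lam4) * (Eexp / lam1) :=
        mul_le_mul (by linarith) h1a (by positivity) (by linarith)
      have h3 : (m : ℝ) * (1 * (1 / a)) ≤ C4 * ((1 + lam4) * (Eexp / lam1)) :=
        mul_le_mul hC4m h2 (by positivity) hC4pos.le
      calc (m : ℝ) / a = (m : ℝ) * (1 * (1 / a)) := by ring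
        _ ≤ _ := h3
    have hterm2 : (m : ℝ) * Lbz * Lgx / a ≤
        Real.exp (max (-(K1 * T)) 0) * (lam1⁻¹ * Lbz) * C4 * Lgx * (1 + lam4) *
          Real.exp (K1 * T) := by
      have heq : Real.exp (max (-(K1 * T)) 0) * (lam1⁻¹ * Lbz) * C4 * Lgx * (1 + lam4) *
          Real.exp (K1 * T) = Lbz * Lgx * (C4 * ((1 + lam4) * (Eexp / lam1))) := by
        rw [← hEE]; field_simp
      rw [heq]
      calc (m : ℝ) * Lbz * Lgx / a = Lbz * Lgx * ((m : ℝ) / a) := by ring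
        _ ≤ Lbz * Lgx * (C4 * ((1 + lam4) * (Eexp / lam1))) :=
          mul_le_mul_of_nonneg_left key (by positivity)
    linarith
  have hne : S.Nonempty := by
    refine ⟨_, a, ha, 2 * (m : ℝ) * Lfz + 1, by linarith, 1, one_pos, rfl⟩
  have hbdd : BddBelow S := ⟨_, hlow⟩
  refine le_antisymm ?_ (le_csInf hne hlow)
  -- Upper bound via a limiting family
  have hK0 : ∀ t : ℝ, 2 * kb + a + Lsx = 0 := fun _ => by rw [ha_def]; ring
  have hq0 : expQuot 0 T = T := by simp [expQuot]
  -- f t := Bbar with lam1 = a, lam3 = 2mLfz + t, lam4 = t⁻¹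
  set f : ℝ → ℝ := fun t =>
    Bbar m T kb Lsx Lbz Lfx Lfz Lgx a (2 * (m : ℝ) * Lfz + t) t⁻¹ with hf_def
  have hf_eq : ∀ t : ℝ, f t =
      Lfx * (a⁻¹ * Lbz) * ((m : ℝ) / (1 - 2 * (m : ℝ) * Lfz * (2 * (m : ℝ) * Lfz + t)⁻¹)) *
        (2 * (2 * (m : ℝ) * Lfz + t)⁻¹) * T
      + (a⁻¹ * Lbz) * ((m : ℝ) / (1 - 2 * (m : ℝ) * Lfz * (2 * (m : ℝ) * Lfz + t)⁻¹)) *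
        Lgx * (1 + t⁻¹) := by
    intro t
    simp only [hf_def, Bbar, hK0 t, zero_mul, neg_zero, max_self, Real.exp_zero, hq0]
    ring
  have htend : Filter.Tendsto f Filter.atTop (nhds ((m : ℝ) * Lbz * Lgx / a)) := by
    have h3 : Filter.Tendsto (fun t : ℝ => (2 * (m : ℝ) * Lfz + t)⁻¹) Filter.atTop
        (nhds 0) := by
      apply Filter.Tendsto.inv_tendsto_atTop
      exact Filter.tendsto_atTop_add_const_left _ _ Filter.tendsto_id
    have hinv : Filter.Tendsto (fun t : ℝ => t⁻¹) Filter.atTop (nhds 0) :=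
      tendsto_inv_atTop_zero
    have hC4 : Filter.Tendsto
        (fun t : ℝ => (m : ℝ) / (1 - 2 * (m : ℝ) * Lfz * (2 * (m : ℝ) * Lfz + t)⁻¹))
        Filter.atTop (nhds ((m : ℝ) / (1 - 2 * (m : ℝ) * Lfz * 0))) := by
      apply Filter.Tendsto.div tendsto_const_nhds
      · exact (tendsto_const_nhds.sub (tendsto_const_nhds.mul h3))
      · norm_num
    have hlim : Filter.Tendsto f Filter.atTop (nhds
        (Lfx * (a⁻¹ * Lbz) * ((m : ℝ) / (1 - 2 * (m : ℝ) * Lfz * 0)) * (2 * 0) * T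
          + (a⁻¹ * Lbz) * ((m : ℝ) / (1 - 2 * (m : ℝ) * Lfz * 0)) * Lgx * (1 + 0))) := by
      rw [show f = fun t => Lfx * (a⁻¹ * Lbz) *
          ((m : ℝ) / (1 - 2 * (m : ℝ) * Lfz * (2 * (m : ℝ) * Lfz + t)⁻¹)) *
          (2 * (2 * (m : ℝ) * Lfz + t)⁻¹) * T
          + (a⁻¹ * Lbz) * ((m : ℝ) / (1 - 2 * (m : ℝ) * Lfz * (2 * (m : ℝ) * Lfz + t)⁻¹)) *
          Lgx * (1 + t⁻¹) from funext hf_eq]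
      exact ((((tendsto_const_nhds.mul hC4).mul
        (tendsto_const_nhds.mul h3)).mul tendsto_const_nhds).add
        (((tendsto_const_nhds.mul hC4).mul tendsto_const_nhds).mul
          (tendsto_const_nhds.add hinv)))
    have hL : Lfx * (a⁻¹ * Lbz) * ((m : ℝ) / (1 - 2 * (m : ℝ) * Lfz * 0)) * (2 * 0) * T
          + (a⁻¹ * Lbz) * ((m : ℝ) / (1 - 2 * (m : ℝ) * Lfz * 0)) * Lgx * (1 + 0)
        = (m : ℝ) * Lbz * Lgx / a := by
      have ha' : a ≠ 0 := ne_of_gt ha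
      have h1 : (1 : ℝ) - 2 * (m : ℝ) * Lfz * 0 = 1 := by ring
      rw [h1, div_one]
      field_simp
      ring
    rwa [hL] at hlim
  refine ge_of_tendsto htend ?_
  filter_upwards [Filter.eventually_gt_atTop 0] with t ht
  exact csInf_le hbdd ⟨a, ha, 2 * (m : ℝ) * Lfz + t, by linarith, t⁻¹, by positivity, rfl⟩
end
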